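/- arXiv:2308.05293 — 5 statements merged into one kernel-verified Lean document; each statement's English description precedes it below -/
import Mathlib

section
/- Let G be a finite connected 2-edge-connected simple graph, and let P be a vertex of G. Then there is no vertex Q ≠ P such that the divisors P and Q are linearly equivalent (i.e., there is no f : V(G) → ℤ with P − Q equal to the Laplacian divisor Δ(f)). -/
open scoped Classical

namespace GraphDiv

variable {V : Type*}

/-- The Laplacian divisor of an integer-valued function on the vertices. -/
noncomputable def lap (G : SimpleGraph V) [Fintype V] (f : V → ℤ) : V → ℤ :=
  fun P => ∑ Q : V, if G.Adj P Q then f P - f Q else 0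

/-- Linear equivalence of divisors: `D ∼ D'` iff `D - D' = Δ(f)` for some `f`. -/
def LinEquiv (G : SimpleGraph V) [Fintype V] (D D' : V → ℤ) : Prop :=
  ∃ f : V → ℤ, D - D' = lap G f

/-- A divisor is effective if all its coefficients are nonnegative. -/
def Effective (D : V → ℤ) : Prop := ∀ P, 0 ≤ D P

/-- The degree of a divisor. -/
def degDiv [Fintype V] (D : V → ℤ) : ℤ := ∑ P : V, D P

/-- The complete linear system of a divisor. -/
def linSys (G : SimpleGraph V) [Fintype V] (D : V → ℤ) : Set (V → ℤ) :=
  {E | Effective E ∧ LinEquiv G E D}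

/-- `RankEq G D r` says the Baker–Norine rank of `D` equals `r`. -/
def RankEq (G : SimpleGraph V) [Fintype V] (D : V → ℤ) (r : ℤ) : Prop :=
  -1 ≤ r ∧
  (∀ E : V → ℤ, Effective E → degDiv E ≤ r → (linSys G (D - E)).Nonempty) ∧
  ∃ E : V → ℤ, Effective E ∧ degDiv E = r + 1 ∧ linSys G (D - E) = ∅

/-- The divisor consisting of a single vertex. -/
noncomputable def unit (P : V) : V → ℤ := fun Q => if Q = P then 1 else 0

/-- A graph is 2-edge-connected if it is connected and stays connected
after removing any single edge. -/
def TwoEdgeConnected (G : SimpleGraph V) : Prop :=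
  G.Connected ∧ ∀ v w : V, G.Adj v w → (G.deleteEdges {s(v, w)}).Connected

/-- Action of a graph automorphism on divisors. -/
def divAct {G : SimpleGraph V} (σ : G ≃g G) (D : V → ℤ) : V → ℤ :=
  fun v => D (σ.symm v)

/-- Two vertices lie in the same orbit of a subgroup of automorphisms. -/
def vrel {G : SimpleGraph V} (H : Subgroup (G ≃g G)) (v w : V) : Prop :=
  ∃ σ ∈ H, σ v = w

/-- An edge is collapsed in the quotient: its endpoints lie in the same vertex orbit. -/
def Collapsed {G : SimpleGraph V} (H : Subgroup (G ≃g G)) (e : Sym2 V) : Prop :=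
  ∃ a b : V, e = s(a, b) ∧ vrel H a b

/-- The quotient morphism `G → G/H` is harmonic: for every vertex `P`, the number of
edges at `P` lying above a given non-collapsed edge-orbit incident to the class of `P`
is independent of the choice of that edge-orbit. -/
def QuotHarmonic (G : SimpleGraph V) (H : Subgroup (G ≃g G)) : Prop :=
  ∀ (P : V) (e₁ e₂ : Sym2 V), e₁ ∈ G.edgeSet → e₂ ∈ G.edgeSet →
    (∃ σ ∈ H, P ∈ Sym2.map (⇑σ) e₁) → (∃ σ ∈ H, P ∈ Sym2.map (⇑σ) e₂) →
    ¬ Collapsed H e₁ → ¬ Collapsed H e₂ →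
    Nat.card {e : Sym2 V // e ∈ G.edgeSet ∧ P ∈ e ∧ ∃ σ ∈ H, Sym2.map (⇑σ) e = e₁} =
    Nat.card {e : Sym2 V // e ∈ G.edgeSet ∧ P ∈ e ∧ ∃ σ ∈ H, Sym2.map (⇑σ) e = e₂}

/-- `H` acts harmonically on `G`: for every subgroup `Δ ≤ H` the quotient morphism
`G → G/Δ` is harmonic. -/
def HarmonicAction (G : SimpleGraph V) (H : Subgroup (G ≃g G)) : Prop :=
  ∀ Δ : Subgroup (G ≃g G), Δ ≤ H → QuotHarmonic G Δ

/-- `P` is a Galois point with respect to `|D|`. -/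
def IsGaloisPoint (G : SimpleGraph V) [Fintype V] (D : V → ℤ) (P : V) : Prop :=
  RankEq G (D - unit P) 1 ∧
  (∀ Q : V, RankEq G (D - unit P - unit Q) 0) ∧
  ∃ H : Subgroup (G ≃g G), (Nat.card H : ℤ) = degDiv D - 1 ∧
    (∃ v w : V, ¬ vrel H v w) ∧
    HarmonicAction G H ∧
    ∃ E₁ E₂ : V → ℤ, E₁ ≠ E₂ ∧ E₁ ∈ linSys G (D - unit P) ∧ E₂ ∈ linSys G (D - unit P) ∧
      ∀ σ ∈ H, divAct σ E₁ = E₁ ∧ divAct σ E₂ = E₂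

/-- A divisor is `q`-reduced. -/
def QReduced (G : SimpleGraph V) [Fintype V] (q : V) (D : V → ℤ) : Prop :=
  (∀ P : V, P ≠ q → 0 ≤ D P) ∧
  ∀ S : Finset V, S.Nonempty → q ∉ S →
    ∃ P ∈ S, D P < (((G.neighborFinset P).filter (fun Q => Q ∉ S)).card : ℤ)

/-- The wheel graph on `m + 1` vertices: hub `none` and rim `some i` for `i : Fin m`,
with the rim a cycle via `i ↦ i + 1 (mod m)`. -/
def wheel (m : ℕ) : SimpleGraph (Option (Fin m)) where
  Adj v w :=
    match v, w with
    | none, none => False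
    | none, some _ => True
    | some _, none => True
    | some i, some j => i ≠ j ∧ ((i.val + 1) % m = j.val ∨ (j.val + 1) % m = i.val)
  symm := by
    constructor
    intro v w h
    cases v <;> cases w <;> simp_all <;> tauto
  loopless := by constructor; intro v; cases v <;> simp

/-- The 4-cycle `P₁P₂P₃P₄` with the chord `P₁P₃` (vertices `0,1,2,3`). -/
def g4 : SimpleGraph (Fin 4) :=
  SimpleGraph.fromRel (fun v w =>
    (v = 0 ∧ w = 1) ∨ (v = 1 ∧ w = 2) ∨ (v = 2 ∧ w = 3) ∨ (v = 3 ∧ w = 0) ∨ (v = 0 ∧ w = 2))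

end GraphDiv


/-!
If `P - Q = Δ(f)` with `Q ≠ P`, look at the level set `S` where `f` attains its maximum. At a
vertex `a ∈ S` every term `f a - f w` of `Δ(f)(a)` is nonnegative, and at least `1` when
`w ∉ S`, so `a` has at most `(P - Q)(a)` neighbours outside `S`. Hence `Q ∉ S`, and every edge
leaving `S` starts at `P`, where there is room for only one of them. But `S` is a proper
nonempty vertex set of a 2-edge-connected graph, so at least two edges leave it.
-/

open Finset

namespace GraphDiv

variable {V : Type*}

noncomputable def lowerNeighbors [Fintype V] (G : SimpleGraph V) (f : V → ℤ) (a : V) :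
    Finset V :=
  {w | G.Adj a w ∧ f w < f a}

section Extremal

variable [Fintype V] {G : SimpleGraph V} {f : V → ℤ} {P Q a : V}

theorem card_lowerNeighbors_le_lap (hmax : ∀ w, f w ≤ f a) :
    (#(lowerNeighbors G f a) : ℤ) ≤ lap G f a := by
  rw [lowerNeighbors, natCast_card_filter, lap]
  refine sum_le_sum fun w _ => ?_
  have := hmax w
  split_ifs with hlow hadj hadj <;> first | omega | exact absurd hlow.1 hadj

theorem card_lowerNeighbors_le_unit_sub_unit (hf : unit P - unit Q = lap G f)
    (hmax : ∀ w, f w ≤ f a) : (#(lowerNeighbors G f a) : ℤ) ≤ unit P a - unit Q a :=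
  (card_lowerNeighbors_le_lap hmax).trans_eq (congrFun hf a).symm

theorem not_isMax_of_lap_eq_unit_sub_unit (hf : unit P - unit Q = lap G f) (hQP : Q ≠ P) :
    ¬ ∀ w, f w ≤ f Q := fun hmax => by
  have := card_lowerNeighbors_le_unit_sub_unit hf hmax
  simp only [unit, hQP, if_true, if_false] at this
  omega

theorem eq_of_lowerNeighbors_nonempty (hf : unit P - unit Q = lap G f) (hmax : ∀ w, f w ≤ f a)
    (hne : (lowerNeighbors G f a).Nonempty) : a = P := by
  have hpos : (1 : ℤ) ≤ #(lowerNeighbors G f a) := by exact_mod_cast hne.card_pos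
  have := hpos.trans (card_lowerNeighbors_le_unit_sub_unit hf hmax)
  by_contra haP
  simp only [unit, haP, if_false] at this
  split_ifs at this <;> omega

theorem card_lowerNeighbors_le_one (hf : unit P - unit Q = lap G f) (hmax : ∀ w, f w ≤ f a) :
    #(lowerNeighbors G f a) ≤ 1 := by
  have := card_lowerNeighbors_le_unit_sub_unit hf hmax
  simp only [unit] at this
  split_ifs at this <;> omega

end Extremal

theorem TwoEdgeConnected.connected_deleteEdges {G : SimpleGraph V} (h : TwoEdgeConnected G)
    (e : Sym2 V) : (G.deleteEdges {e}).Connected := by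
  by_cases he : e ∈ G.edgeSet
  · induction e using Sym2.ind with
    | _ v w => exact h.2 v w he
  · rw [SimpleGraph.deleteEdges_eq_self.2 (Set.disjoint_singleton_right.2 he)]
    exact h.1

end GraphDiv

theorem SimpleGraph.Connected.exists_adj_mem_notMem {V : Type*} {G : SimpleGraph V}
    (h : G.Connected) {S : Set V} {u w : V} (hu : u ∈ S) (hw : w ∉ S) :
    ∃ a b, G.Adj a b ∧ a ∈ S ∧ b ∉ S := by
  obtain ⟨p⟩ := h.preconnected u w
  obtain ⟨d, -, hd⟩ := p.exists_boundary_dart S hu hw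
  exact ⟨d.fst, d.snd, d.adj, hd⟩

open GraphDiv in
/-- In a 2-edge-connected graph, no two distinct vertices are linearly
equivalent as divisors. -/
theorem stmt0 {V : Type*} [Fintype V] (G : SimpleGraph V)
    (h2 : TwoEdgeConnected G) (P : V) :
    ¬ ∃ Q : V, Q ≠ P ∧ LinEquiv G (unit P) (unit Q) := by
  rintro ⟨Q, hQP, f, hf⟩
  obtain ⟨v₀, -, hmax⟩ := univ.exists_max_image f ⟨P, mem_univ P⟩
  set S : Set V := {v | f v = f v₀}
  have hv₀ : v₀ ∈ S := rfl
  have hQ : Q ∉ S := fun (hQ : f Q = f v₀) =>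
    not_isMax_of_lap_eq_unit_sub_unit hf hQP fun w => hQ ▸ hmax w (mem_univ w)
  have hcross : ∀ a b, G.Adj a b → a ∈ S → b ∉ S →
      (∀ w, f w ≤ f a) ∧ b ∈ lowerNeighbors G f a :=
    fun a b hab (ha : f a = f v₀) (hb : f b ≠ f v₀) =>
      ⟨fun w => ha ▸ hmax w (mem_univ w),
        by simpa [lowerNeighbors, hab, ha] using (hmax b (mem_univ b)).lt_of_ne hb⟩
  obtain ⟨a, b, hab, ha, hb⟩ := h2.1.exists_adj_mem_notMem hv₀ hQ
  obtain ⟨a', b', hab', ha', hb'⟩ :=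
    (h2.connected_deleteEdges s(a, b)).exists_adj_mem_notMem hv₀ hQ
  rw [SimpleGraph.deleteEdges_adj, Set.mem_singleton_iff] at hab'
  obtain ⟨hmax_a, hba⟩ := hcross a b hab ha hb
  obtain ⟨hmax_a', hba'⟩ := hcross a' b' hab'.1 ha' hb'
  obtain rfl : a' = a := (eq_of_lowerNeighbors_nonempty hf hmax_a' ⟨b', hba'⟩).trans
    (eq_of_lowerNeighbors_nonempty hf hmax_a ⟨b, hba⟩).symm
  obtain rfl : b' = b := card_le_one.1 (card_lowerNeighbors_le_one hf hmax_a) b' hba' b hba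
  exact hab'.2 rfl
end

section
/- Let G be a finite connected simple graph, D a divisor on G, and q a vertex. Then there exists exactly one q-reduced divisor linearly equivalent to D. -/
open scoped Classical

/-
Uniqueness is a maximum principle: if `D₁ - D₂ = Δ f` with `D₁` q-reduced and `D₂` effective
away from `q`, then `f` attains its maximum at `q`, since otherwise the set `T` where `f` is
maximal satisfies `D₁(P) = D₂(P) + Δf(P) ≥ outdeg_T(P)` on all of `T`. Applied symmetrically,
`f` is constant.

For existence, firing a large multiple of `P ↦ n ^ (n - dist(P, q))` makes `D` effective away
from `q`. Among the firing functions `f` keeping `D - Δ f` effective away from `q`, first maximise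
its coefficient at `q`. The maximisers with `f q = 0` form a finite set, as `Δ` is injective on
them for connected `G`, and one maximising `∑ f` gives a q-reduced divisor: firing a set `S ∌ q`
that violates reducedness would keep all constraints and increase `∑ f`.
-/

namespace GraphDiv

open Finset

variable {V : Type*} {G : SimpleGraph V}

lemma exists_adj_dist_lt (hG : G.Connected) {P q : V} (hP : P ≠ q) :
    ∃ Q, G.Adj P Q ∧ G.dist Q q < G.dist P q := by
  obtain ⟨p, hp⟩ := hG.exists_walk_length_eq_dist P q
  cases p with
  | nil => exact absurd rfl hP
  | cons hadj p' =>
    exact ⟨_, hadj, (SimpleGraph.dist_le p').trans_lt (by simp at hp; omega)⟩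

def EffectiveAwayFrom (q : V) (E : V → ℤ) : Prop := ∀ P, P ≠ q → 0 ≤ E P

variable [Fintype V]

noncomputable def outdeg (G : SimpleGraph V) (S : Finset V) (P : V) : ℕ :=
  #{Q ∈ G.neighborFinset P | Q ∉ S}

noncomputable def lapLinearMap (G : SimpleGraph V) : (V → ℤ) →ₗ[ℤ] (V → ℤ) where
  toFun := lap G
  map_add' f g := by
    ext P
    simp only [lap, Pi.add_apply, ← sum_add_distrib]
    exact sum_congr rfl fun Q _ => by split_ifs <;> ring
  map_smul' c f := by
    ext P
    simp only [lap, Pi.smul_apply, smul_eq_mul, RingHom.id_apply, mul_sum]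
    exact sum_congr rfl fun Q _ => by split_ifs <;> ring

lemma lap_add (f g : V → ℤ) : lap G (f + g) = lap G f + lap G g := (lapLinearMap G).map_add f g

lemma lap_sub (f g : V → ℤ) : lap G (f - g) = lap G f - lap G g := (lapLinearMap G).map_sub f g

lemma lap_neg (f : V → ℤ) : lap G (-f) = -lap G f := (lapLinearMap G).map_neg f

lemma lap_smul (c : ℤ) (f : V → ℤ) : lap G (c • f) = c • lap G f :=
  (lapLinearMap G).map_smul c f

lemma lap_const (c : ℤ) : lap G (fun _ => c) = 0 := by
  ext P
  simp [lap]

lemma lap_eq_sum_neighborFinset (f : V → ℤ) (P : V) :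
    lap G f P = ∑ Q ∈ G.neighborFinset P, (f P - f Q) := by
  rw [lap, G.neighborFinset_eq_filter, sum_filter]

lemma degDiv_lap (f : V → ℤ) : degDiv (lap G f) = 0 := by
  have hanti : degDiv (lap G f) = -degDiv (lap G f) := by
    calc degDiv (lap G f)
        = ∑ Q : V, ∑ P : V, (if G.Adj P Q then f P - f Q else 0) := sum_comm
      _ = ∑ Q : V, ∑ P : V, -(if G.Adj Q P then f Q - f P else 0) := by
        refine sum_congr rfl fun Q _ => sum_congr rfl fun P _ => ?_
        simp only [G.adj_comm P Q]
        split_ifs <;> ring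
      _ = -degDiv (lap G f) := by simp only [sum_neg_distrib, degDiv, lap]
  omega

lemma degDiv_sub_lap (D f : V → ℤ) : degDiv (D - lap G f) = degDiv D := by
  have h := degDiv_lap (G := G) f
  simp only [degDiv, Pi.sub_apply, sum_sub_distrib] at h ⊢
  rw [h, sub_zero]

lemma LinEquiv.symm {D D' : V → ℤ} (h : LinEquiv G D D') : LinEquiv G D' D := by
  obtain ⟨f, hf⟩ := h
  exact ⟨-f, by rw [lap_neg, ← hf, neg_sub]⟩

lemma LinEquiv.trans {D D' D'' : V → ℤ} (h : LinEquiv G D D') (h' : LinEquiv G D' D'') :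
    LinEquiv G D D'' := by
  obtain ⟨f, hf⟩ := h
  obtain ⟨g, hg⟩ := h'
  exact ⟨f + g, by rw [lap_add, ← hf, ← hg, sub_add_sub_cancel]⟩

lemma outdeg_le_lap {f : V → ℤ} {T : Finset V} {P : V} (hmax : ∀ Q, f Q ≤ f P)
    (hT : ∀ Q, Q ∉ T → f Q < f P) : (outdeg G T P : ℤ) ≤ lap G f P := by
  rw [lap_eq_sum_neighborFinset, outdeg, card_filter, Nat.cast_sum]
  refine sum_le_sum fun Q _ => ?_
  by_cases hQ : Q ∈ T
  · simp only [hQ, not_true_eq_false, if_false, Nat.cast_zero, sub_nonneg, hmax Q]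
  · simp only [hQ, not_false_eq_true, if_true, Nat.cast_one]
    linarith [hT Q hQ]

lemma lap_indicator_of_mem {S : Finset V} {P : V} (hP : P ∈ S) :
    lap G (fun Q => if Q ∈ S then 1 else 0) P = outdeg G S P := by
  rw [lap_eq_sum_neighborFinset, outdeg, card_filter, Nat.cast_sum]
  refine sum_congr rfl fun Q _ => ?_
  by_cases hQ : Q ∈ S <;> simp [hP, hQ]

lemma lap_indicator_nonpos_of_notMem {S : Finset V} {P : V} (hP : P ∉ S) :
    lap G (fun Q => if Q ∈ S then 1 else 0) P ≤ 0 := by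
  rw [lap_eq_sum_neighborFinset]
  refine sum_nonpos fun Q _ => ?_
  split_ifs <;> simp_all

theorem QReduced.le_of_sub_eq_lap {q : V} {D E f : V → ℤ} (hD : QReduced G q D)
    (hE : EffectiveAwayFrom q E) (hf : D - E = lap G f) (P : V) : f P ≤ f q := by
  by_contra! hP
  obtain ⟨m, -, hm⟩ := exists_max_image univ f ⟨q, mem_univ q⟩
  let T : Finset V := {Q | f Q = f m}
  have hqT : q ∉ T := by simpa [T] using (hP.trans_le (hm P (mem_univ P))).ne
  obtain ⟨R, hRT, hR⟩ := hD.2 T ⟨m, by simp [T]⟩ hqT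
  have hRm : f R = f m := by simpa [T] using hRT
  have hout : (outdeg G T R : ℤ) ≤ lap G f R :=
    outdeg_le_lap (fun Q => hRm ▸ hm Q (mem_univ Q))
      (fun Q hQ => lt_of_le_of_ne (hRm ▸ hm Q (mem_univ Q)) (by simpa [T, hRm] using hQ))
  have hDR : D R - E R = lap G f R := congrFun hf R
  have hER := hE R (by rintro rfl; exact hqT hRT)
  have hR' : D R < outdeg G T R := hR
  omega

theorem QReduced.eq_of_linEquiv {q : V} {D₁ D₂ : V → ℤ} (h₁ : QReduced G q D₁)
    (h₂ : QReduced G q D₂) (h : LinEquiv G D₁ D₂) : D₁ = D₂ := by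
  obtain ⟨f, hf⟩ := h
  have hmax := h₁.le_of_sub_eq_lap h₂.1 hf
  have hmin := h₂.le_of_sub_eq_lap h₁.1 (f := -f) (by rw [lap_neg, ← hf, neg_sub])
  have hconst : f = fun _ => f q :=
    funext fun P => le_antisymm (hmax P) (by simpa using hmin P)
  rw [← sub_eq_zero, hf, hconst, lap_const]

lemma eq_of_lap_eq_zero (hG : G.Connected) {f : V → ℤ} (hf : lap G f = 0) {m : V}
    (hm : ∀ Q, f Q ≤ f m) (P : V) : f P = f m := by
  by_contra hP
  let T : Finset V := {Q | f Q = f m}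
  obtain ⟨p⟩ := hG.preconnected m P
  obtain ⟨d, -, hdT, hdT'⟩ :=
    p.exists_boundary_dart (T : Set V) (by simp [T]) (by simpa [T] using hP)
  have hd : f d.fst = f m := by simpa [T] using hdT
  have hout : (outdeg G T d.fst : ℤ) ≤ lap G f d.fst :=
    outdeg_le_lap (fun Q => hd ▸ hm Q)
      (fun Q hQ => lt_of_le_of_ne (hd ▸ hm Q) (by simpa [T, hd] using hQ))
  have hpos : 0 < outdeg G T d.fst := card_pos.mpr ⟨d.snd, by simpa [T, d.adj] using hdT'⟩
  rw [hf, Pi.zero_apply] at hout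
  omega

lemma lap_neg_of_adj {f : V → ℤ} {P Q : V} (hf : ∀ R, 0 ≤ f R) (hP : 0 < f P)
    (hPQ : G.Adj P Q) (hQ : Fintype.card V * f P ≤ f Q) : lap G f P < 0 := by
  have hdeg : (G.degree P : ℤ) + 1 ≤ Fintype.card V := by
    exact_mod_cast G.degree_lt_card_verts P
  have hsum : f Q ≤ ∑ R ∈ G.neighborFinset P, f R :=
    single_le_sum (fun R _ => hf R) ((G.mem_neighborFinset P Q).mpr hPQ)
  rw [lap_eq_sum_neighborFinset, sum_sub_distrib, sum_const, G.card_neighborFinset_eq_degree,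
    nsmul_eq_mul]
  nlinarith

/-- The witness `P ↦ n ^ (n - dist(P, q))` grows by a factor `n` along a step towards `q`. -/
lemma exists_lap_neg_of_ne (hG : G.Connected) (q : V) :
    ∃ g : V → ℤ, ∀ P, P ≠ q → lap G g P < 0 := by
  set n := Fintype.card V
  have hn : 0 < n := Fintype.card_pos_iff.mpr ⟨q⟩
  refine ⟨fun P => (n : ℤ) ^ (n - G.dist P q), fun P hP => ?_⟩
  obtain ⟨Q, hPQ, hQ⟩ := exists_adj_dist_lt hG hP
  have hPn : G.dist P q < n := by
    obtain ⟨p, hp, hlen⟩ := hG.exists_path_of_dist P q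
    exact hlen ▸ hp.length_lt
  refine lap_neg_of_adj (fun R => by positivity) (by positivity) hPQ ?_
  rw [← pow_succ']
  exact pow_le_pow_right₀ (by exact_mod_cast hn) (by omega)

lemma exists_effectiveAwayFrom_sub_lap (hG : G.Connected) (D : V → ℤ) (q : V) :
    ∃ f : V → ℤ, EffectiveAwayFrom q (D - lap G f) := by
  obtain ⟨g, hg⟩ := exists_lap_neg_of_ne hG q
  let c := ∑ P, |D P|
  refine ⟨c • g, fun P hP => ?_⟩
  have hc : |D P| ≤ c := single_le_sum (fun R _ => abs_nonneg (D R)) (mem_univ P)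
  have hgP : lap G g P ≤ -1 := by linarith [hg P hP]
  have hcg : c * lap G g P ≤ -c := by nlinarith [abs_nonneg (D P)]
  rw [Pi.sub_apply, lap_smul, Pi.smul_apply, smul_eq_mul]
  linarith [neg_abs_le (D P)]

lemma degDiv_sub_apply_eq_sum (E : V → ℤ) (q : V) :
    degDiv E - E q = ∑ P ∈ univ.erase q, E P :=
  (sum_erase_eq_sub (mem_univ q)).symm

lemma apply_le_degDiv {q : V} {E : V → ℤ} (hE : EffectiveAwayFrom q E) : E q ≤ degDiv E := by
  have := degDiv_sub_apply_eq_sum E q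
  have : 0 ≤ ∑ P ∈ univ.erase q, E P := sum_nonneg fun P hP => hE P (ne_of_mem_erase hP)
  omega

lemma apply_le_degDiv_sub_apply {q P : V} {E : V → ℤ} (hE : EffectiveAwayFrom q E)
    (hP : P ≠ q) : E P ≤ degDiv E - E q := by
  rw [degDiv_sub_apply_eq_sum]
  exact single_le_sum (fun R hR => hE R (ne_of_mem_erase hR)) (mem_erase.mpr ⟨hP, mem_univ P⟩)

lemma finite_effectiveAwayFrom (q : V) (M d : ℤ) :
    {E : V → ℤ | EffectiveAwayFrom q E ∧ E q = M ∧ degDiv E = d}.Finite := by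
  refine (Set.finite_Icc (fun _ => min M 0) (fun _ => max M (d - M))).subset ?_
  rintro E ⟨hE, rfl, rfl⟩
  refine ⟨fun P => ?_, fun P => ?_⟩
  · by_cases hP : P = q
    · exact hP ▸ min_le_left _ _
    · exact (min_le_right _ _).trans (hE P hP)
  · by_cases hP : P = q
    · exact hP ▸ le_max_left _ _
    · exact (apply_le_degDiv_sub_apply hE hP).trans (le_max_right _ _)

lemma lap_injOn (hG : G.Connected) (q : V) : Set.InjOn (lap G) {f | f q = 0} := by
  intro f hf g hg hfg
  obtain ⟨m, -, hm⟩ := exists_max_image univ (f - g) ⟨q, mem_univ q⟩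
  have h0 : lap G (f - g) = 0 := by rw [lap_sub, hfg, sub_self]
  have hconst := eq_of_lap_eq_zero hG h0 fun Q => hm Q (mem_univ Q)
  funext P
  have hP : f P - g P = f m - g m := hconst P
  have hq : f q - g q = f m - g m := hconst q
  have hf' : f q = 0 := hf
  have hg' : g q = 0 := hg
  omega

theorem qReduced_sub_lap_of_maximal {q : V} {D f : V → ℤ}
    (hf : EffectiveAwayFrom q (D - lap G f))
    (hmax : ∀ g : V → ℤ, EffectiveAwayFrom q (D - lap G g) → g q = f q →
      (D - lap G f) q ≤ (D - lap G g) q → ∑ P, g P ≤ ∑ P, f P) :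
    QReduced G q (D - lap G f) := by
  refine ⟨hf, fun S hS hqS => ?_⟩
  by_contra! hfire
  let χ : V → ℤ := fun Q => if Q ∈ S then 1 else 0
  have hfired : D - lap G (f + χ) = (D - lap G f) - lap G χ := by
    rw [lap_add, sub_add_eq_sub_sub]
  have hadm : EffectiveAwayFrom q (D - lap G (f + χ)) := by
    intro P hP
    rw [hfired, Pi.sub_apply, sub_nonneg]
    by_cases hPS : P ∈ S
    · exact (lap_indicator_of_mem hPS).trans_le (hfire P hPS)
    · exact (lap_indicator_nonpos_of_notMem hPS).trans (hf P hP)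
  have hsum := hmax (f + χ) hadm (by simp [χ, hqS]) (by
    rw [hfired]
    exact (le_sub_self_iff _).mpr (lap_indicator_nonpos_of_notMem hqS))
  have hχ : ∑ P, χ P = #S := by simp [χ]
  simp only [Pi.add_apply, sum_add_distrib, hχ] at hsum
  have hS' : 0 < #S := card_pos.mpr hS
  omega

theorem exists_qReduced_linEquiv (hG : G.Connected) (D : V → ℤ) (q : V) :
    ∃ D', QReduced G q D' ∧ LinEquiv G D' D := by
  obtain ⟨f₀, hf₀⟩ := exists_effectiveAwayFrom_sub_lap hG D q
  obtain ⟨M, ⟨f₁, hf₁, hf₁M⟩, hM⟩ :=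
    Int.exists_greatest_of_bdd
      (P := fun m => ∃ f, EffectiveAwayFrom q (D - lap G f) ∧ (D - lap G f) q = m)
      ⟨degDiv D, by rintro _ ⟨f, hf, rfl⟩; simpa [degDiv_sub_lap] using apply_le_degDiv hf⟩
      ⟨_, f₀, hf₀, rfl⟩
  let S : Set (V → ℤ) :=
    {f | EffectiveAwayFrom q (D - lap G f) ∧ f q = 0 ∧ (D - lap G f) q = M}
  have hSfin : S.Finite := by
    refine Set.Finite.of_finite_image (f := fun f => D - lap G f)
      ((finite_effectiveAwayFrom q M (degDiv D)).subset ?_) ?_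
    · rintro _ ⟨f, ⟨hf, -, hfM⟩, rfl⟩
      exact ⟨hf, hfM, degDiv_sub_lap D f⟩
    · exact fun f hf g hg hfg => lap_injOn hG q hf.2.1 hg.2.1 (sub_right_injective hfg)
  have hshift : lap G (f₁ - fun _ => f₁ q) = lap G f₁ := by rw [lap_sub, lap_const, sub_zero]
  have hf₁S : f₁ - (fun _ => f₁ q) ∈ S :=
    ⟨fun P hP => hshift ▸ hf₁ P hP, sub_self _, hshift ▸ hf₁M⟩
  obtain ⟨f, ⟨hfAdm, hfq, hfM⟩, hfmax⟩ :=
    Set.exists_max_image S (fun f => ∑ P, f P) hSfin ⟨_, hf₁S⟩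
  refine ⟨D - lap G f, qReduced_sub_lap_of_maximal hfAdm fun g hg hgq hgM => ?_, -f, ?_⟩
  · exact hfmax g ⟨hg, hgq.trans hfq, le_antisymm (hM _ ⟨g, hg, rfl⟩) (hfM ▸ hgM)⟩
  · rw [lap_neg, sub_sub_cancel_left]

end GraphDiv


open GraphDiv in
/-- Existence and uniqueness of the `q`-reduced divisor in each linear
equivalence class. -/
theorem stmt1 {V : Type*} [Fintype V] (G : SimpleGraph V) (hG : G.Connected)
    (D : V → ℤ) (q : V) :
    ∃! D' : V → ℤ, QReduced G q D' ∧ LinEquiv G D' D := by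
  obtain ⟨D', hD', hlin⟩ := exists_qReduced_linEquiv hG D q
  refine ⟨D', ⟨hD', hlin⟩, fun E ⟨hE, hElin⟩ => ?_⟩
  exact hE.eq_of_linEquiv hD' (hElin.trans hlin.symm)
end

section
/- Let W_n be the wheel graph on vertices P_1, …, P_n with n ≥ 5, where P_1 is the hub, and let D = P_1 + ⋯ + P_n. Then the rank of D equals 2. -/
open scoped Classical

/-! If `E` is effective of degree at most `2`, then `D - E` is already effective unless
`E = 2P`, and then firing `P` once repairs it, since `P` has a neighbour.
For `E = 2·hub + P_last`, the divisor `D - E` is `-1` at the hub, `0` at `P_last` and `1` on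
the rest of the rim. Suppose `D - E + Δg ≥ 0` and look at a vertex where `g` is minimal, where
`Δg` loses one chip per neighbour with a larger value: the hub cannot be minimal, hence neither
can `P_last`, and walking along the rim from a minimal vertex one finds a minimal `P_i` whose
successor `P_{i+1}` is not minimal, so `P_i` loses at least `2` chips. -/

lemma Fin.exists_castSucc_and_not_succ {n : ℕ} {p : Fin (n + 1) → Prop} {j : Fin (n + 1)}
    (hj : p j) (hlast : ¬ p (Fin.last n)) : ∃ i : Fin n, p i.castSucc ∧ ¬ p i.succ := by
  by_contra! h
  refine hlast (Fin.induction (motive := fun k => j ≤ k → p k) ?_ ?_ (Fin.last n) j.le_last)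
  · intro hj0
    rwa [Fin.le_zero_iff.1 hj0] at hj
  · intro i ih hji
    rcases hji.lt_or_eq with hlt | rfl
    · exact h i (ih (Fin.castSucc_lt_succ_iff.1 hlt))
    · exact hj

namespace GraphDiv

section Divisors

variable {V : Type*} [Fintype V] (G : SimpleGraph V)

lemma lap_unit_self (v : V) : lap G (unit v) v = G.degree v := by
  have hterm : ∀ Q, (if G.Adj v Q then unit v v - unit v Q else 0) =
      if G.Adj v Q then 1 else 0 := by
    intro Q
    by_cases h : G.Adj v Q
    · simp [unit, h, h.ne']
    · simp [h]
  simp only [lap, hterm, Finset.sum_boole, ← SimpleGraph.card_neighborFinset_eq_degree,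
    SimpleGraph.neighborFinset_eq_filter]

lemma lap_unit_of_ne {v P : V} (hP : P ≠ v) :
    lap G (unit v) P = if G.Adj P v then -1 else 0 := by
  rw [lap, Finset.sum_eq_single v (fun Q _ hQ => by simp [unit, hP, hQ]) (by simp)]
  simp [unit, hP]

lemma lap_le_sum_of_forall_le {g : V → ℤ} {P : V} (hP : ∀ Q, g P ≤ g Q) (s : Finset V)
    (hs : ∀ Q ∈ s, G.Adj P Q) : lap G g P ≤ ∑ Q ∈ s, (g P - g Q) := by
  calc lap G g P ≤ ∑ Q ∈ s, if G.Adj P Q then g P - g Q else 0 :=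
        Finset.sum_le_sum_of_subset_of_nonpos' (Finset.subset_univ s) fun Q _ _ => by
          split_ifs <;> linarith [hP Q]
    _ = ∑ Q ∈ s, (g P - g Q) := Finset.sum_congr rfl fun Q hQ => if_pos (hs Q hQ)

lemma eq_zero_of_two_le_of_degDiv_le_two {E : V → ℤ} (hE : Effective E) (hdeg : degDiv E ≤ 2)
    {v P : V} (hv : 2 ≤ E v) (hP : P ≠ v) : E P = 0 := by
  have hpair : E v + E P ≤ degDiv E := by
    rw [degDiv, ← Finset.sum_pair hP.symm]
    exact Finset.sum_le_sum_of_subset_of_nonneg (Finset.subset_univ _) fun Q _ _ => hE Q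
  linarith [hE P]

lemma linSys_one_sub_nonempty_of_degDiv_le_two (G : SimpleGraph V)
    (hG : ∀ v, ∃ w, G.Adj v w) {E : V → ℤ} (hE : Effective E) (hdeg : degDiv E ≤ 2) :
    (linSys G (1 - E)).Nonempty := by
  by_cases hle : ∀ P, E P ≤ 1
  · exact ⟨1 - E, fun P => by simp [hle P], 0, by ext; simp [lap]⟩
  push Not at hle
  obtain ⟨v, hv⟩ := hle
  refine ⟨1 - E + lap G (unit v), fun P => ?_, unit v, add_sub_cancel_left _ _⟩
  by_cases hP : P = v
  · subst hP
    have hv2 : E P ≤ 2 := (Finset.single_le_sum (fun Q _ => hE Q) (Finset.mem_univ P)).trans hdeg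
    have hP_deg := (G.degree_pos_iff_exists_adj P).2 (hG P)
    simp only [Pi.add_apply, Pi.sub_apply, Pi.one_apply, lap_unit_self]
    omega
  · simp only [Pi.add_apply, Pi.sub_apply, Pi.one_apply, lap_unit_of_ne G hP,
      eq_zero_of_two_le_of_degDiv_le_two hE hdeg hv hP]
    split_ifs <;> norm_num

end Divisors

section Wheel

variable {m : ℕ}

lemma wheel_adj_none_some (i : Fin m) : (wheel m).Adj none (some i) := trivial

lemma wheel_adj_some_none (i : Fin m) : (wheel m).Adj (some i) none := trivial

lemma wheel_adj_castSucc_succ {n : ℕ} (i : Fin n) :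
    (wheel (n + 1)).Adj (some i.castSucc) (some i.succ) :=
  ⟨i.castSucc_lt_succ.ne, Or.inl (Nat.mod_eq_of_lt i.succ.isLt)⟩

lemma wheel_exists_adj (hm : 0 < m) (v : Option (Fin m)) : ∃ w, (wheel m).Adj v w := by
  cases v with
  | none => exact ⟨some ⟨0, hm⟩, wheel_adj_none_some _⟩
  | some i => exact ⟨none, wheel_adj_some_none i⟩

lemma linSys_wheel_one_sub_eq_empty (n : ℕ) :
    linSys (wheel (n + 1)) (1 - (2 • unit none + unit (some (Fin.last n)))) = ∅ := by
  set D := 1 - (2 • unit none + unit (some (Fin.last n))) with hD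
  have hD_hub : D none = -1 := by simp [hD, unit]
  have hD_last : D (some (Fin.last n)) = 0 := by simp [hD, unit]
  have hD_rim (i : Fin n) : D (some i.castSucc) = 1 := by
    simp [hD, unit, Fin.castSucc_ne_last]
  rw [Set.eq_empty_iff_forall_notMem]
  rintro E ⟨hE, g, hg⟩
  have hnonneg (P : Option (Fin (n + 1))) : 0 ≤ D P + lap (wheel (n + 1)) g P := by
    linarith [congrFun hg P, hE P, Pi.sub_apply E D P]
  obtain ⟨v, hv⟩ := Finite.exists_min g
  by_cases hhub : g none = g v
  · have hlap := lap_le_sum_of_forall_le (wheel (n + 1)) (hhub ▸ hv) ∅ (by simp)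
    rw [Finset.sum_empty] at hlap
    linarith [hnonneg none]
  by_cases hlast : g (some (Fin.last n)) = g v
  · have hlap := lap_le_sum_of_forall_le (wheel (n + 1)) (hlast ▸ hv) {none}
      (by simpa using wheel_adj_some_none _)
    rw [Finset.sum_singleton] at hlap
    have := hnonneg (some (Fin.last n))
    have := hv none
    omega
  obtain ⟨j, rfl⟩ : ∃ j, v = some j := Option.ne_none_iff_exists'.1 (by rintro rfl; exact hhub rfl)
  obtain ⟨i, hi, hsucc⟩ := Fin.exists_castSucc_and_not_succ
    (p := fun k => g (some k) = g (some j)) rfl hlast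
  have hlap := lap_le_sum_of_forall_le (wheel (n + 1)) (hi ▸ hv) {none, some i.succ}
    (by simp [wheel_adj_some_none, wheel_adj_castSucc_succ])
  rw [Finset.sum_pair (Option.some_ne_none _).symm] at hlap
  have := hnonneg (some i.castSucc)
  have := hv none
  have := hv (some i.succ)
  have := hD_rim i
  omega

end Wheel

end GraphDiv

open GraphDiv in
/-- On the wheel `W_n` (`n = m + 1 ≥ 5`), `D = P₁ + ⋯ + Pₙ` has rank `2`. -/
theorem stmt7 (m : ℕ) (hm : 4 ≤ m) :
    RankEq (wheel m) (fun _ => 1) 2 := by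
  obtain ⟨n, rfl⟩ : ∃ n, m = n + 1 := ⟨m - 1, by omega⟩
  refine ⟨by norm_num, fun E hE hdeg => ?_, 2 • unit none + unit (some (Fin.last n)), ?_, ?_,
    linSys_wheel_one_sub_eq_empty n⟩
  · exact linSys_one_sub_nonempty_of_degDiv_le_two _ (wheel_exists_adj n.succ_pos) hE hdeg
  · intro P
    simp only [Pi.add_apply, Pi.smul_apply, unit]
    positivity
  · simp [degDiv, unit, Finset.sum_add_distrib]
end

section
/- Let W_n be the wheel graph on vertices P_1, …, P_n with n ≥ 5, where P_1 is the hub, and let D = P_1 + ⋯ + P_n. Then D is linearly equivalent to 4P_2 + P_4 + ⋯ + P_{n−1}. -/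
/-! Write `D' = 4P₂ + P₄ + ⋯ + P_{n-1}`. Firing `P₂` once in `D'` sends one chip to each of its
three neighbours `P₁, P₃, Pₙ` and produces `D`; that is, `D - D' = Δ(-χ_{P₂})`. The Laplacian
of an indicator is a column of Mathlib's Laplacian matrix, so everything reduces to the
neighbourhood of `P₂` in the wheel. -/

open scoped Classical

open scoped Matrix

namespace GraphDiv

variable {V : Type*} [Fintype V]

theorem lap_eq_lapMatrix_mulVec (G : SimpleGraph V) (f : V → ℤ) :
    lap G f = G.lapMatrix ℤ *ᵥ f := by
  funext P
  rw [SimpleGraph.lapMatrix_mulVec_apply, lap, Finset.sum_ite, Finset.sum_const_zero, add_zero,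
    Finset.sum_sub_distrib, Finset.sum_const, ← SimpleGraph.card_neighborFinset_eq_degree]
  simp only [nsmul_eq_mul, SimpleGraph.neighborFinset_eq_filter]

theorem wheel_adj_some_zero_iff {m : ℕ} (hm : 3 ≤ m) (i : Fin m) :
    (wheel m).Adj (some i) (some ⟨0, by omega⟩) ↔ i.val = 1 ∨ i.val = m - 1 := by
  have hi := i.isLt
  change i ≠ ⟨0, _⟩ ∧ ((i.val + 1) % m = 0 ∨ 1 % m = i.val) ↔ _
  simp only [Ne, Fin.ext_iff, Nat.mod_eq_of_lt (by omega : 1 < m)]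
  rcases Nat.lt_or_ge (i.val + 1) m with h | h
  · rw [Nat.mod_eq_of_lt h]; omega
  · rw [show i.val + 1 = m by omega, Nat.mod_self]; omega

theorem wheel_neighborFinset_some_zero {m : ℕ} (hm : 3 ≤ m) :
    (wheel m).neighborFinset (some ⟨0, by omega⟩) =
      {none, some ⟨1, by omega⟩, some ⟨m - 1, by omega⟩} := by
  ext (_ | i)
  · simp only [SimpleGraph.mem_neighborFinset, Finset.mem_insert, Finset.mem_singleton]
    simp [wheel]
  · rw [SimpleGraph.mem_neighborFinset, SimpleGraph.adj_comm, wheel_adj_some_zero_iff hm]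
    simp [Fin.ext_iff]

theorem wheel_degree_some_zero {m : ℕ} (hm : 3 ≤ m) :
    (wheel m).degree (some ⟨0, by omega⟩) = 3 := by
  rw [← SimpleGraph.card_neighborFinset_eq_degree, wheel_neighborFinset_some_zero hm,
    Finset.card_insert_of_notMem (by simp), Finset.card_pair (by simp [Fin.ext_iff]; omega)]

end GraphDiv

open GraphDiv in
/-- Here `n = m + 1`, the hub `P₁` is `none` and the rim vertex `P_j` is `some (j - 2)`. -/
theorem stmt9 (m : ℕ) (hm : 4 ≤ m) :
    LinEquiv (wheel m) (fun _ => 1)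
      (fun v => match v with
        | none => 0
        | some i => if i.val = 0 then 4
                    else if 2 ≤ i.val ∧ i.val ≤ m - 2 then 1 else 0) := by
  refine ⟨Pi.single (some ⟨0, by omega⟩) (-1), ?_⟩
  rw [lap_eq_lapMatrix_mulVec, Matrix.mulVec_single]
  funext v
  rcases v with _ | i
  · have hub_adj : (wheel m).Adj none (some ⟨0, by omega⟩) := trivial
    simp [SimpleGraph.lapMatrix, SimpleGraph.degMatrix, SimpleGraph.adjMatrix_apply, hub_adj]
  · obtain ⟨_ | k, hk⟩ := i
    · simp [SimpleGraph.lapMatrix, SimpleGraph.degMatrix, wheel_degree_some_zero (by omega : 3 ≤ m)]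
    · simp [SimpleGraph.lapMatrix, SimpleGraph.degMatrix, SimpleGraph.adjMatrix_apply,
        wheel_adj_some_zero_iff (by omega : 3 ≤ m)]
      split_ifs <;> omega
end

section
/- Let K_n be the complete graph on vertices P_1, …, P_n with n ≥ 4, and let D = P_1 + ⋯ + P_n. Then every vertex P_i is a Galois point with respect to |D|. -/
open scoped Classical

/-!
On `K_n` one has `Δ(f)(Q) = n f(Q) - ∑ f`. Normalising the firing script `f` to be nonnegative
with a zero, an effective `E = D + Δ(f)` with `D ≤ 1` forces `∑ f ≤ 1`; if moreover `D a < 0`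
and `D b ≤ 0` at two vertices, then `f a ≥ 1` and then `f b ≥ 1`, which is absurd. So the
divisors `D - 2P - Q` (`Q ≠ P`) and `D - P - 2Q` have empty linear systems, while
`D - 2P ~ (n - 2) P` by firing `P`; this gives the ranks of `D - P` and `D - P - Q`.
For the Galois structure take the cyclic group generated by an `(n - 1)`-cycle on the vertices
other than `P`: it fixes `P` and acts freely elsewhere, so every vertex stabilizer of every
subgroup acts freely on the incident edges, which makes all quotients harmonic; `(n - 1) P` and
`D - P` are two invariant members of `|D - P|`.
-/

theorem Equiv.Perm.IsCycle.eq_one_of_mem_zpowers {α : Type*} [Fintype α] [DecidableEq α]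
    {π ρ : Equiv.Perm α} (hπ : π.IsCycle) (hρ : ρ ∈ Subgroup.zpowers π) {x : α}
    (hx : x ∈ π.support) (h : ρ x = x) : ρ = 1 := by
  obtain ⟨k, rfl⟩ := mem_powers_iff_mem_zpowers.mpr hρ
  exact (hπ.pow_eq_one_iff' (Equiv.Perm.mem_support.mp hx)).mpr h

theorem Finset.exists_isCycle_support_eq {α : Type*} [Fintype α] [DecidableEq α] {s : Finset α}
    (hs : 2 ≤ s.card) : ∃ π : Equiv.Perm α, π.IsCycle ∧ π.support = s := by
  have hlen : 2 ≤ s.toList.length := by simpa using hs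
  refine ⟨s.toList.formPerm, List.isCycle_formPerm s.nodup_toList hlen, ?_⟩
  rw [List.support_formPerm_of_nodup _ s.nodup_toList, Finset.toList_toFinset]
  intro x hx
  simp [hx] at hlen

namespace GraphDiv

variable {V : Type*}

section Divisors

lemma effective_unit (P : V) : Effective (unit P) := fun Q => by
  unfold unit; split_ifs <;> norm_num

lemma divAct_sub {G : SimpleGraph V} (σ : G ≃g G) (D D' : V → ℤ) :
    divAct σ (D - D') = divAct σ D - divAct σ D' := rfl

lemma divAct_smul {G : SimpleGraph V} (σ : G ≃g G) (c : ℤ) (D : V → ℤ) :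
    divAct σ (c • D) = c • divAct σ D := rfl

lemma divAct_const {G : SimpleGraph V} (σ : G ≃g G) (c : ℤ) :
    divAct σ (fun _ => c) = fun _ => c := rfl

lemma divAct_unit {G : SimpleGraph V} (σ : G ≃g G) (P : V) : divAct σ (unit P) = unit (σ P) := by
  ext v
  simp only [divAct, unit, RelIso.symm_apply_eq]

variable [Fintype V]

lemma degDiv_unit (P : V) : degDiv (unit P) = 1 := by
  simp [degDiv, unit]

lemma degDiv_add (D D' : V → ℤ) : degDiv (D + D') = degDiv D + degDiv D' :=
  Finset.sum_add_distrib

lemma eq_zero_or_eq_unit_of_degDiv_le_one {E : V → ℤ} (hE : Effective E)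
    (hdeg : degDiv E ≤ 1) : E = 0 ∨ ∃ Q, E = unit Q := by
  by_cases h : ∀ Q, E Q = 0
  · exact Or.inl (funext h)
  push Not at h
  obtain ⟨Q, hQ⟩ := h
  have hsplit : degDiv E = E Q + ∑ R ∈ Finset.univ.erase Q, E R :=
    (Finset.add_sum_erase _ _ (Finset.mem_univ Q)).symm
  have hrest : 0 ≤ ∑ R ∈ Finset.univ.erase Q, E R := Finset.sum_nonneg fun R _ => hE R
  have hQ1 : E Q = 1 := by have := hE Q; omega
  have hzero := (Finset.sum_eq_zero_iff_of_nonneg (s := Finset.univ.erase Q)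
    fun R _ => hE R).mp (by omega)
  refine Or.inr ⟨Q, funext fun R => ?_⟩
  by_cases hR : R = Q
  · simp [unit, hR, hQ1]
  · simp [unit, hR, hzero R (Finset.mem_erase.mpr ⟨hR, Finset.mem_univ R⟩)]

lemma self_mem_linSys (G : SimpleGraph V) {D : V → ℤ} (hD : Effective D) : D ∈ linSys G D :=
  ⟨hD, 0, by ext P; simp [lap]⟩

end Divisors

section CompleteGraph

variable [Fintype V]

lemma lap_top_apply (f : V → ℤ) (P : V) :
    lap ⊤ f P = Fintype.card V * f P - ∑ Q, f Q := by
  have hterm : lap ⊤ f P = ∑ Q, (f P - f Q) :=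
    Finset.sum_congr rfl fun Q _ => by by_cases h : P = Q <;> simp [h]
  simp [hterm, Finset.sum_sub_distrib]

lemma smul_unit_mem_linSys_top (P : V) {k : ℤ} (hk : k ≤ Fintype.card V) :
    (Fintype.card V - k) • unit P ∈ linSys ⊤ ((fun _ => 1) - k • unit P) := by
  refine ⟨fun R => mul_nonneg (by omega) (effective_unit P R), unit P, ?_⟩
  ext R
  rw [lap_top_apply, ← degDiv, degDiv_unit]
  simp only [Pi.sub_apply, Pi.smul_apply, smul_eq_mul]
  ring

theorem linSys_top_eq_empty {D : V → ℤ} {a b : V} (hab : a ≠ b) (hD : ∀ Q, D Q ≤ 1)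
    (ha : D a < 0) (hb : D b ≤ 0) : linSys ⊤ D = ∅ := by
  refine Set.eq_empty_of_forall_notMem ?_
  rintro E ⟨hE, f, hf⟩
  obtain ⟨i₀, -, hi₀⟩ := Finset.exists_min_image Finset.univ f ⟨a, Finset.mem_univ a⟩
  set g : V → ℤ := fun Q => f Q - f i₀ with hg_def
  set s := ∑ Q, g Q with hs_def
  have hg : ∀ Q, 0 ≤ g Q := fun Q => sub_nonneg.mpr (hi₀ Q (Finset.mem_univ Q))
  have hEg : ∀ Q, E Q = D Q + Fintype.card V * g Q - s := by
    intro Q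
    have := congrFun hf Q
    simp only [Pi.sub_apply, lap_top_apply] at this
    simp only [hs_def, hg_def, Finset.sum_sub_distrib, Finset.sum_const, Finset.card_univ,
      nsmul_eq_mul]
    linarith
  have hs : s ≤ 1 := by
    have := hEg i₀
    have := hE i₀
    have := hD i₀
    simp only [hg_def, sub_self, mul_zero] at *
    linarith
  have hpos : ∀ Q, D Q < s → 1 ≤ g Q := by
    intro Q hQ
    by_contra hcon
    have h0 : g Q = 0 := by have := hg Q; omega
    have := hEg Q
    have := hE Q
    rw [h0, mul_zero] at *
    linarith
  have hsum_ge : ∀ Q, g Q ≤ s := fun Q =>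
    Finset.single_le_sum (fun R _ => hg R) (Finset.mem_univ Q)
  have hga := hpos a (by linarith [Finset.sum_nonneg fun R (_ : R ∈ Finset.univ) => hg R])
  have hgb := hpos b (by linarith [hsum_ge a])
  have hpair : g a + g b ≤ s := by
    rw [hs_def, ← Finset.sum_pair hab]
    exact Finset.sum_le_sum_of_subset_of_nonneg (Finset.subset_univ _) fun R _ _ => hg R
  linarith

variable [Nontrivial V]

lemma linSys_top_one_sub_unit_sub_unit_nonempty (P Q : V) :
    (linSys ⊤ ((fun _ => 1) - unit P - unit Q)).Nonempty := by
  by_cases hQ : Q = P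
  · subst hQ
    have hcard : (2 : ℤ) ≤ Fintype.card V := by exact_mod_cast Fintype.one_lt_card
    rw [sub_sub, ← two_smul ℤ]
    exact ⟨_, smul_unit_mem_linSys_top Q hcard⟩
  · refine ⟨_, self_mem_linSys ⊤ fun R => ?_⟩
    by_cases hRP : R = P <;> by_cases hRQ : R = Q <;> simp_all [unit]

lemma rankEq_top_one_sub_unit (P : V) : RankEq ⊤ ((fun _ => 1) - unit P) 1 := by
  obtain ⟨Q, hQ⟩ := exists_ne P
  refine ⟨by norm_num, fun E hE hdeg => ?_, unit P + unit Q,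
    fun R => add_nonneg (effective_unit P R) (effective_unit Q R), ?_, ?_⟩
  · rcases eq_zero_or_eq_unit_of_degDiv_le_one hE hdeg with rfl | ⟨R, rfl⟩
    · refine ⟨_, self_mem_linSys ⊤ fun R => ?_⟩
      by_cases hRP : R = P <;> simp [unit, hRP]
    · exact linSys_top_one_sub_unit_sub_unit_nonempty P R
  · rw [degDiv_add, degDiv_unit, degDiv_unit]
  · refine linSys_top_eq_empty hQ.symm (fun R => ?_) (by simp [unit, hQ.symm]) (by simp [unit, hQ])
    by_cases hRP : R = P <;> by_cases hRQ : R = Q <;> simp_all [unit]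

lemma rankEq_top_one_sub_unit_sub_unit (P Q : V) :
    RankEq ⊤ ((fun _ => 1) - unit P - unit Q) 0 := by
  refine ⟨by norm_num, fun E hE hdeg => ?_, ?_⟩
  · rcases eq_zero_or_eq_unit_of_degDiv_le_one hE (by omega) with rfl | ⟨R, rfl⟩
    · simpa using linSys_top_one_sub_unit_sub_unit_nonempty P Q
    · rw [degDiv_unit] at hdeg; omega
  by_cases hQ : Q = P
  · subst hQ
    obtain ⟨R, hR⟩ := exists_ne Q
    refine ⟨unit R, effective_unit R, by rw [degDiv_unit]; norm_num,
      linSys_top_eq_empty hR.symm (fun S => ?_) (by simp [unit, hR.symm]) (by simp [unit, hR])⟩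
    by_cases hSQ : S = Q <;> by_cases hSR : S = R <;> simp_all [unit]
  · refine ⟨unit Q, effective_unit Q, by rw [degDiv_unit]; norm_num,
      linSys_top_eq_empty hQ (fun S => ?_) (by simp [unit, hQ]) (by simp [unit, Ne.symm hQ])⟩
    by_cases hSP : S = P <;> by_cases hSQ : S = Q <;> simp_all [unit]

end CompleteGraph

section Harmonic

variable {G : SimpleGraph V}

lemma map_mem_edgeSet (σ : G ≃g G) {e : Sym2 V} (he : e ∈ G.edgeSet) :
    Sym2.map σ e ∈ G.edgeSet := by
  induction e using Sym2.ind with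
  | _ a b => exact σ.map_adj_iff.mpr he

lemma inv_apply_eq_of_apply_eq {σ : G ≃g G} {a b : V} (h : σ a = b) : σ⁻¹ b = a := by
  rw [← h]; exact RelIso.inv_apply_self σ a

/-- The edges counted on the left are the translates of one of them by the stabilizer of `v`. -/
theorem card_edges_over_eq_card_stabilizer (Δ : Subgroup (G ≃g G))
    (hfree : ∀ σ ∈ Δ, ∀ v w, G.Adj v w → σ v = v → σ w = w → σ = 1)
    {v : V} {e₀ : Sym2 V} (he₀ : e₀ ∈ G.edgeSet) (hv : ∃ σ ∈ Δ, v ∈ Sym2.map σ e₀)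
    (hc : ¬ Collapsed Δ e₀) :
    Nat.card {e : Sym2 V // e ∈ G.edgeSet ∧ v ∈ e ∧ ∃ σ ∈ Δ, Sym2.map σ e = e₀} =
      Nat.card {σ : G ≃g G // σ ∈ Δ ∧ σ v = v} := by
  obtain ⟨τ, hτ, hvτ⟩ := hv
  obtain ⟨w, hw⟩ := Sym2.mem_iff_exists.mp hvτ
  have hvw : G.Adj v w := by
    rw [← SimpleGraph.mem_edgeSet, ← hw]; exact map_mem_edgeSet τ he₀
  have he₀_eq : e₀ = s(τ⁻¹ v, τ⁻¹ w) := by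
    rw [← Sym2.map_mk, ← hw, Sym2.map_map, ← RelIso.coe_mul, inv_mul_cancel]
    simp
  symm
  refine Nat.card_eq_of_bijective
    (fun σ => ⟨s(v, σ.1 w), ?_, Sym2.mem_mk_left _ _, τ⁻¹ * σ.1⁻¹,
      mul_mem (inv_mem hτ) (inv_mem σ.2.1), ?_⟩) ⟨?_, ?_⟩
  · rcases σ with ⟨σ, -, hσv⟩
    simpa [hσv] using σ.map_adj_iff.mpr hvw
  · rcases σ with ⟨σ, -, hσv⟩
    simp [he₀_eq, RelIso.inv_apply_self, inv_apply_eq_of_apply_eq hσv]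
  · rintro ⟨σ, hσ, hσv⟩ ⟨ρ, hρ, hρv⟩ h
    have hw' : σ w = ρ w := Sym2.congr_right.mp (congrArg Subtype.val h)
    refine Subtype.ext (inv_mul_eq_one.mp (hfree _ (mul_mem (inv_mem hρ) hσ) v w hvw ?_ ?_)).symm
    · rw [RelIso.mul_apply, hσv, inv_apply_eq_of_apply_eq hρv]
    · rw [RelIso.mul_apply, hw', RelIso.inv_apply_self]
  · rintro ⟨e, -, hve, μ, hμ, hμe⟩
    obtain ⟨u, rfl⟩ := Sym2.mem_iff_exists.mp hve
    have hτμ : s((τ * μ) v, (τ * μ) u) = s(v, w) := by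
      rw [← hw, hμe.symm, Sym2.map_map, Sym2.map_mk]; rfl
    rcases Sym2.eq_iff.mp hτμ with ⟨hv, hu⟩ | ⟨-, hu⟩
    · refine ⟨⟨(τ * μ)⁻¹, inv_mem (mul_mem hτ hμ), ?_⟩, ?_⟩
      · exact inv_apply_eq_of_apply_eq hv
      · rw [Subtype.mk.injEq, inv_apply_eq_of_apply_eq hu]
    · -- `τ * μ` swaps the two ends, so they lie in one orbit
      refine absurd ⟨μ u, μ v, ?_, μ * (τ * μ) * μ⁻¹, ?_, ?_⟩ hc
      · rw [← hμe, Sym2.map_mk, Sym2.eq_swap]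
      · exact mul_mem (mul_mem hμ (mul_mem hτ hμ)) (inv_mem hμ)
      · simp only [RelIso.mul_apply, RelIso.inv_apply_self] at hu ⊢
        rw [hu]

theorem harmonicAction_of_edge_stabilizer_trivial {H : Subgroup (G ≃g G)}
    (hfree : ∀ σ ∈ H, ∀ v w, G.Adj v w → σ v = v → σ w = w → σ = 1) :
    HarmonicAction G H := by
  intro Δ hΔ v e₁ e₂ he₁ he₂ hv₁ hv₂ hc₁ hc₂
  have hfreeΔ : ∀ σ ∈ Δ, ∀ v w, G.Adj v w → σ v = v → σ w = w → σ = 1 :=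
    fun σ hσ => hfree σ (hΔ hσ)
  rw [card_edges_over_eq_card_stabilizer Δ hfreeΔ he₁ hv₁ hc₁,
    card_edges_over_eq_card_stabilizer Δ hfreeΔ he₂ hv₂ hc₂]

end Harmonic

section Automorphisms

def topAutOfPerm : Equiv.Perm V →* ((⊤ : SimpleGraph V) ≃g (⊤ : SimpleGraph V)) where
  toFun := SimpleGraph.Iso.completeGraph
  map_one' := rfl
  map_mul' _ _ := rfl

lemma topAutOfPerm_injective : Function.Injective (topAutOfPerm (V := V)) :=
  fun _ _ h => Equiv.ext fun v =>
    congrArg (fun σ : (⊤ : SimpleGraph V) ≃g (⊤ : SimpleGraph V) => σ v) h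

theorem exists_harmonic_subgroup_fixing [Fintype V] (P : V) (hV : 3 ≤ Fintype.card V) :
    ∃ H : Subgroup ((⊤ : SimpleGraph V) ≃g (⊤ : SimpleGraph V)),
      Nat.card H = Fintype.card V - 1 ∧ (∀ σ ∈ H, σ P = P) ∧ HarmonicAction ⊤ H := by
  have hcard : (Finset.univ.erase P).card = Fintype.card V - 1 :=
    Finset.card_erase_of_mem (Finset.mem_univ P)
  obtain ⟨π, hπ, hsupp⟩ := (Finset.univ.erase P).exists_isCycle_support_eq (by omega)
  have hfix : ∀ σ ∈ (Subgroup.zpowers π).map topAutOfPerm, σ P = P := by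
    rintro _ ⟨ρ, ⟨k, rfl⟩, rfl⟩
    exact Equiv.Perm.zpow_apply_eq_self_of_apply_eq_self
      (Equiv.Perm.notMem_support.mp (by simp [hsupp])) k
  have hfree : ∀ σ ∈ (Subgroup.zpowers π).map topAutOfPerm, ∀ Q, Q ≠ P → σ Q = Q → σ = 1 := by
    rintro _ ⟨ρ, hρ, rfl⟩ Q hQ hρQ
    rw [hπ.eq_one_of_mem_zpowers hρ (by simp [hsupp, hQ]) hρQ, map_one]
  refine ⟨(Subgroup.zpowers π).map topAutOfPerm, ?_, hfix,
    harmonicAction_of_edge_stabilizer_trivial fun σ hσ v w hvw hv hw => ?_⟩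
  · rw [Subgroup.card_map_of_injective topAutOfPerm_injective, Nat.card_zpowers, hπ.orderOf,
      hsupp, hcard]
  · by_cases hvP : v = P
    · exact hfree σ hσ w (hvP ▸ hvw.ne.symm) hw
    · exact hfree σ hσ v hvP hv

end Automorphisms

end GraphDiv

open GraphDiv in
/-- On `K_n` (`n ≥ 4`), every vertex is a Galois point with respect to
`|P₁ + ⋯ + Pₙ|`. -/
theorem stmt13 (n : ℕ) (hn : 4 ≤ n) (P : Fin n) :
    IsGaloisPoint (⊤ : SimpleGraph (Fin n)) (fun _ => 1) P := by
  have : Nontrivial (Fin n) := Fin.nontrivial_iff_two_le.mpr (by omega)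
  obtain ⟨Q, hQ⟩ := exists_ne P
  obtain ⟨H, hcard, hfix, hharm⟩ := exists_harmonic_subgroup_fixing P (by simp; omega)
  have hdeg : degDiv (fun _ : Fin n => (1 : ℤ)) = n := by simp [degDiv]
  have hE₁ := smul_unit_mem_linSys_top P (k := 1) (by simp; omega)
  rw [one_smul] at hE₁
  refine ⟨rankEq_top_one_sub_unit P, rankEq_top_one_sub_unit_sub_unit P, H, ?_,
    ⟨P, Q, fun ⟨σ, hσ, hσP⟩ => hQ (hσP ▸ hfix σ hσ)⟩, hharm, _, _, ?_, hE₁,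
    self_mem_linSys ⊤ ?_, fun σ hσ => ⟨by rw [divAct_smul, divAct_unit, hfix σ hσ],
      by rw [divAct_sub, divAct_const, divAct_unit, hfix σ hσ]⟩⟩
  · rw [hcard, hdeg]; simp; omega
  · intro h
    have := congrFun h Q
    simp [unit, hQ] at this
  · intro R
    by_cases hRP : R = P <;> simp [unit, hRP]
end
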